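/- arXiv:math/0307085 — 3 statements merged into one kernel-verified Lean document; each statement's English description precedes it below -/
import Mathlib

section
/- For every k ∈ I and all i, j ∈ I, the linear operators on the Fock space F(Λ_k) satisfy T_j⁺ ∘ E_i = q^{s_j a_{ji}} · (E_i ∘ T_j⁺) and T_d ∘ E_i = q^{δ_{0,i}} · (E_i ∘ T_d). -/
open scoped Classical

noncomputable section

/-- The base field `ℚ(q)`. -/
abbrev Kq : Type := RatFunc ℚ

/-- The indeterminate `q` of `ℚ(q)`. -/
def fq : Kq := RatFunc.X

/-- The generalized Cartan matrix of affine type `C_n^{(1)}` (meaningful for `i, j ≤ n`). -/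
def cartan (n i j : ℕ) : ℤ :=
  if i = j then 2
  else if i = 1 ∧ j = 0 then -2
  else if i = n - 1 ∧ j = n then -2
  else if i + 1 = j ∨ j + 1 = i then -1
  else 0

/-- The symmetrizing integers: `s 0 = s n = 2`, otherwise `1`. -/
def sg (n i : ℕ) : ℕ := if i = 0 ∨ i = n then 2 else 1

/-- `q_i = q ^ s_i`. -/
def qi (n i : ℕ) : Kq := fq ^ sg n i

/-- The colour of the site `(l, z)`: the unique `i ∈ {0,…,n}` with
`l + z ≡ i` or `-i (mod 2n)`. -/
def colour (n l : ℕ) (z : ℤ) : ℕ :=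
  let r := (((l : ℤ) + z) % (2 * (n : ℤ))).toNat
  if r ≤ n then r else 2 * n - r

/-- A Young diagram of charge `k`: a nondecreasing sequence of integers eventually
equal to `k`. -/
structure YD (n k : ℕ) where
  y : ℕ → ℤ
  mono : Monotone y
  eventually : ∃ N, ∀ l, N ≤ l → y l = (k : ℤ)

variable {n k : ℕ}

/-- `Y` has a concave corner at site `(l, z)`. -/
def ConcaveAt (Y : YD n k) (l : ℕ) (z : ℤ) : Prop :=
  (l = 0 ∧ z = Y.y 0) ∨ (∃ m, l = m + 1 ∧ Y.y m < Y.y (m + 1) ∧ z = Y.y (m + 1))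

/-- `Y` has a convex corner at site `(l, z)`. -/
def ConvexAt (Y : YD n k) (l : ℕ) (z : ℤ) : Prop :=
  ∃ m, l = m + 1 ∧ Y.y m < Y.y (m + 1) ∧ z = Y.y m

/-- The number of `i`-coloured concave corners of `Y`. -/
def cc (i : ℕ) (Y : YD n k) : ℕ :=
  {p : ℕ × ℤ | ConcaveAt Y p.1 p.2 ∧ colour n p.1 p.2 = i}.ncard

/-- The number of `i`-coloured convex corners of `Y`. -/
def cx (i : ℕ) (Y : YD n k) : ℕ :=
  {p : ℕ × ℤ | ConvexAt Y p.1 p.2 ∧ colour n p.1 p.2 = i}.ncard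

/-- The number of `j`-coloured boxes of `Y`. -/
def boxes (j : ℕ) (Y : YD n k) : ℕ :=
  {p : ℕ × ℤ | Y.y p.1 < p.2 ∧ p.2 ≤ (k : ℤ) ∧ colour n p.1 p.2 = j}.ncard

/-- Removing the convex corner of `Y` at site `(l, z)`. -/
def removeY (Y : YD n k) (l : ℕ) (z : ℤ) (h : ConvexAt Y l z) : YD n k where
  y := Function.update Y.y (l - 1) (Y.y (l - 1) + 1)
  mono := by
    obtain ⟨m, rfl, hlt, -⟩ := h
    simp only [Nat.add_sub_cancel]
    apply monotone_nat_of_le_succ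
    intro r
    rcases eq_or_ne r m with rfl | h1
    · rw [Function.update_self, Function.update_of_ne (by omega)]
      omega
    · rcases eq_or_ne (r + 1) m with h2 | h2
      · rw [Function.update_of_ne h1, h2, Function.update_self]
        have hm := Y.mono (Nat.le_add_right r 1)
        rw [h2] at hm
        omega
      · rw [Function.update_of_ne h1, Function.update_of_ne h2]
        exact Y.mono (Nat.le_add_right r 1)
  eventually := by
    obtain ⟨N, hN⟩ := Y.eventually
    exact ⟨N + l + 1, fun r hr => by
      rw [Function.update_of_ne (by omega)]
      exact hN r (by omega)⟩

/-- Adding a box at the concave corner of `Y` at site `(l, z)`. -/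
def addY (Y : YD n k) (l : ℕ) (z : ℤ) (h : ConcaveAt Y l z) : YD n k where
  y := Function.update Y.y l (Y.y l - 1)
  mono := by
    apply monotone_nat_of_le_succ
    intro r
    rcases eq_or_ne r l with rfl | h1
    · rw [Function.update_self, Function.update_of_ne (by omega)]
      have := Y.mono (Nat.le_add_right r 1)
      omega
    · rcases eq_or_ne (r + 1) l with h2 | h2
      · rw [Function.update_of_ne h1, h2, Function.update_self]
        rcases h with ⟨hl0, -⟩ | ⟨m, hm, hlt, -⟩
        · omega
        · have hrm : r = m := by omega
          subst hrm
          rw [← hm] at hlt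
          omega
      · rw [Function.update_of_ne h1, Function.update_of_ne h2]
        exact Y.mono (Nat.le_add_right r 1)
  eventually := by
    obtain ⟨N, hN⟩ := Y.eventually
    exact ⟨N + l + 1, fun r hr => by
      rw [Function.update_of_ne (by omega)]
      exact hN r (by omega)⟩

/-- The Fock space `F(Λ_k)`: the `ℚ(q)`-vector space with basis the Young diagrams of
charge `k`. -/
abbrev Fock (n k : ℕ) := YD n k →₀ Kq

/-- The basis vector of the Fock space corresponding to a Young diagram. -/
def fockB (Y : YD n k) : Fock n k := Finsupp.single Y 1

/-- The linear operator on the Fock space determined by its values on basis vectors. -/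
def lift (g : YD n k → Fock n k) : Fock n k →ₗ[Kq] Fock n k :=
  Finsupp.lsum Kq fun Y => LinearMap.toSpanSingleton Kq (Fock n k) (g Y)

/-- The single-site operator `E_{(l,z)}`. -/
def Esite (n k : ℕ) (l : ℕ) (z : ℤ) : Fock n k →ₗ[Kq] Fock n k :=
  lift fun Y => if h : ConvexAt Y l z then fockB (removeY Y l z h) else 0

/-- The single-site operator `F_{(l,z)}`. -/
def Fsite (n k : ℕ) (l : ℕ) (z : ℤ) : Fock n k →ₗ[Kq] Fock n k :=
  lift fun Y => if h : ConcaveAt Y l z then fockB (addY Y l z h) else 0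

/-- `a(i,l,z,Y)`: the number of `i`-coloured concave corners at sites greater than `(l,z)`
minus the number of `i`-coloured convex corners at sites greater than `(l,z)`. -/
def aExp (i l : ℕ) (z : ℤ) (Y : YD n k) : ℤ :=
  ({p : ℕ × ℤ | ConcaveAt Y p.1 p.2 ∧ colour n p.1 p.2 = i ∧
      (l : ℤ) + z < (p.1 : ℤ) + p.2}.ncard : ℤ)
  - ({p : ℕ × ℤ | ConvexAt Y p.1 p.2 ∧ colour n p.1 p.2 = i ∧
      (l : ℤ) + z < (p.1 : ℤ) + p.2}.ncard : ℤ)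

/-- `b(i,l,z,Y)`: the number of `i`-coloured convex corners at sites smaller than `(l,z)`
minus the number of `i`-coloured concave corners at sites smaller than `(l,z)`. -/
def bExp (i l : ℕ) (z : ℤ) (Y : YD n k) : ℤ :=
  ({p : ℕ × ℤ | ConvexAt Y p.1 p.2 ∧ colour n p.1 p.2 = i ∧
      (p.1 : ℤ) + p.2 < (l : ℤ) + z}.ncard : ℤ)
  - ({p : ℕ × ℤ | ConcaveAt Y p.1 p.2 ∧ colour n p.1 p.2 = i ∧
      (p.1 : ℤ) + p.2 < (l : ℤ) + z}.ncard : ℤ)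

/-- The Chevalley-type operator `E_i` on the Fock space: on a basis diagram `Y`,
`E_i Y = Σ_{(l,z) : i-coloured convex corner of Y} q_i^{a(i,l,z,Y)} • (Y with corner removed)`,
where the power of `q_i` records the product of the `T⁺` factors at larger `i`-coloured sites. -/
def Ei (n k i : ℕ) : Fock n k →ₗ[Kq] Fock n k :=
  lift fun Y => ∑ᶠ p : ℕ × ℤ,
    if h : ConvexAt Y p.1 p.2 ∧ colour n p.1 p.2 = i then
      (qi n i ^ aExp i p.1 p.2 Y) • fockB (removeY Y p.1 p.2 h.1)
    else 0

/-- The Chevalley-type operator `F_i` on the Fock space: on a basis diagram `Y`,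
`F_i Y = Σ_{(l,z) : i-coloured concave corner of Y} q_i^{b(i,l,z,Y)} • (Y with box added)`,
where the power of `q_i` records the product of the `T⁻` factors at smaller `i`-coloured sites. -/
def Fi (n k i : ℕ) : Fock n k →ₗ[Kq] Fock n k :=
  lift fun Y => ∑ᶠ p : ℕ × ℤ,
    if h : ConcaveAt Y p.1 p.2 ∧ colour n p.1 p.2 = i then
      (qi n i ^ bExp i p.1 p.2 Y) • fockB (addY Y p.1 p.2 h.1)
    else 0

/-- The operator `T_i⁺ = ∏_{(l,z) of colour i} T⁺_{(l,z)}`: it multiplies a basis diagram `Y`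
by `q_i^{cc_i(Y) - cx_i(Y)}`. -/
def Tplus (n k i : ℕ) : Fock n k →ₗ[Kq] Fock n k :=
  lift fun Y => (qi n i ^ ((cc i Y : ℤ) - (cx i Y : ℤ))) • fockB Y

/-- The operator `T_i⁻ = ∏_{(l,z) of colour i} T⁻_{(l,z)}`: it multiplies a basis diagram `Y`
by `q_i^{-(cc_i(Y) - cx_i(Y))}`. -/
def Tminus (n k i : ℕ) : Fock n k →ₗ[Kq] Fock n k :=
  lift fun Y => (qi n i ^ (-((cc i Y : ℤ) - (cx i Y : ℤ)))) • fockB Y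

/-- The operator `T_d`: it multiplies a basis diagram `Y` by `q^{-b_0(Y)}`. -/
def Td (n k : ℕ) : Fock n k →ₗ[Kq] Fock n k :=
  lift fun Y => (fq ^ (-(boxes 0 Y : ℤ))) • fockB Y

/-- The quantum integer `[m]_x = (x^m - x^{-m})/(x - x^{-1})`. -/
def qInt (x : Kq) (m : ℕ) : Kq := (x ^ m - x⁻¹ ^ m) / (x - x⁻¹)

/-- The quantum factorial `[m]_x!`. -/
def qFact (x : Kq) : ℕ → Kq
  | 0 => 1
  | m + 1 => qInt x (m + 1) * qFact x m

/-- The quantum binomial coefficient `[m choose r]_x`. -/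
def qBinom (x : Kq) (m r : ℕ) : Kq := qFact x m / (qFact x r * qFact x (m - r))

/-- The empty Young diagram `φ_k` of charge `k`. -/
def phiYD (n k : ℕ) : YD n k :=
  ⟨fun _ => (k : ℤ), monotone_const, ⟨0, fun _ _ => rfl⟩⟩

/-- `Y` has an (either concave or convex) corner at site `(l, z)`. -/
def CornerAt (Y : YD n k) (l : ℕ) (z : ℤ) : Prop := ConcaveAt Y l z ∨ ConvexAt Y l z

/-- `L` lists the sites of the `i`-coloured corners of `Y` in strictly decreasing order. -/
def Enumerates (Y : YD n k) (i : ℕ) (L : List (ℕ × ℤ)) : Prop :=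
  (∀ p : ℕ × ℤ, p ∈ L ↔ (CornerAt Y p.1 p.2 ∧ colour n p.1 p.2 = i)) ∧
  L.Chain' (fun p q => (q.1 : ℤ) + q.2 < (p.1 : ℤ) + p.2)

/-- The `i`-signature of `Y` along the list `L` of its `i`-coloured corner sites:
each site is tagged `true` if the corner there is convex (`σ = 1`) and `false`
if it is concave (`σ = 0`). -/
def sigL (Y : YD n k) (L : List (ℕ × ℤ)) : List ((ℕ × ℤ) × Bool) :=
  L.map fun p => (p, if ConvexAt Y p.1 p.2 then true else false)

/-- Reduction of a signature: repeatedly delete adjacent pairs `(0, 1)` (a concave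
entry immediately followed by a convex entry); the surviving entries are those
indexed by `J(σ)`. -/
def reduceSig : List ((ℕ × ℤ) × Bool) → List ((ℕ × ℤ) × Bool) :=
  List.foldr (fun x acc =>
    if x.2 = false ∧ acc.head?.map Prod.snd = some true then acc.tail else x :: acc) []

/-- The site at which `f̃_i` adds a box: the corner of the smallest index `r ∈ J(σ)`
with `σ_r = 0` (`none` if there is no such index, i.e. `f̃_i Y = 0`). -/
def ftildeSite (Y : YD n k) (i : ℕ) (L : List (ℕ × ℤ)) : Option (ℕ × ℤ) :=
  ((reduceSig (sigL Y L)).find? (fun x => !x.2)).map Prod.fst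

/-- The site at which `ẽ_i` removes a box: the corner of the largest index `r ∈ J(σ)`
with `σ_r = 1` (`none` if there is no such index, i.e. `ẽ_i Y = 0`). -/
def etildeSite (Y : YD n k) (i : ℕ) (L : List (ℕ × ℤ)) : Option (ℕ × ℤ) :=
  (((reduceSig (sigL Y L)).filter (fun x => x.2)).getLast?).map Prod.fst

/-!
`T_j⁺` and `T_d` are diagonal in the basis of Young diagrams, and `E_i` sends `Y` to a
combination of the diagrams obtained by removing one `i`-coloured convex corner. So it suffices
that removing such a corner multiplies the eigenvalue by `q^{s_j a_{ji}}`, resp. `q^{δ_{0i}}`.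

For `T_d` this holds because the removed corner is exactly one box, of colour `i`. For `T_j⁺`:
the colour of a site depends only on its diagonal `l + z`, and `cc_j - cx_j` telescopes to a
boundary term plus a sum over rows `m` of the differences of the indicators that the sites
`(m, y_m)` and `(m + 1, y_m)` have colour `j`. Removing the corner in row `m` shifts only that
term by one diagonal, which changes it by `2δ(t) - δ(t - 1) - δ(t + 1)` for the diagonal `t` of
the corner. As the colouring folds consecutive diagonals onto the Dynkin diagram `0 - 1 - ⋯ - n`,
reflecting at `0` and `n`, this is `a_{j,i}`.
-/

lemma colour_eq_colour_zero (l : ℕ) (z : ℤ) : colour n l z = colour n 0 (l + z) := by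
  simp [colour]

lemma colour_zero_eq {r t : ℤ} (q : ℤ) (hr0 : 0 ≤ r) (hr : r < 2 * n)
    (ht : t = r + 2 * n * q) :
    (colour n 0 t : ℤ) = if r ≤ n then r else 2 * n - r := by
  have : t % (2 * n) = r := by rw [ht, Int.add_mul_emod_self_left, Int.emod_eq_of_lt hr0 hr]
  simp only [colour, Nat.cast_zero, zero_add, this]
  split_ifs <;> omega

lemma colour_zero_neighbours (hn : 0 < n) (t : ℤ) :
    (colour n 0 t = 0 ∧ colour n 0 (t - 1) = 1 ∧ colour n 0 (t + 1) = 1) ∨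
    (colour n 0 t = n ∧ colour n 0 (t - 1) = n - 1 ∧ colour n 0 (t + 1) = n - 1) ∨
    (0 < colour n 0 t ∧ colour n 0 t < n ∧
      (colour n 0 (t - 1) = colour n 0 t - 1 ∧ colour n 0 (t + 1) = colour n 0 t + 1 ∨
       colour n 0 (t - 1) = colour n 0 t + 1 ∧ colour n 0 (t + 1) = colour n 0 t - 1)) := by
  have hn' : (0 : ℤ) < 2 * n := by omega
  have ht : t = t % (2 * n) + 2 * n * (t / (2 * n)) := (Int.emod_add_mul_ediv t _).symm
  have hr0 := Int.emod_nonneg t hn'.ne'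
  have hr := Int.emod_lt_of_pos t hn'
  set r := t % (2 * n)
  set q := t / (2 * n)
  have h0 := colour_zero_eq q hr0 hr ht
  have h1 : (colour n 0 (t + 1) : ℤ) =
      if r + 1 < 2 * n then (if r + 1 ≤ n then r + 1 else 2 * n - (r + 1)) else 0 := by
    split_ifs with h
    · exact (colour_zero_eq q (by omega) h (by omega)).trans (if_pos ‹_›)
    · exact (colour_zero_eq q (by omega) h (by omega)).trans (if_neg ‹_›)
    · rw [colour_zero_eq (q + 1) le_rfl hn' (by linarith), if_pos (by omega)]
  have h2 : (colour n 0 (t - 1) : ℤ) =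
      if 0 < r then (if r - 1 ≤ n then r - 1 else 2 * n - (r - 1)) else 1 := by
    split_ifs with h
    · exact (colour_zero_eq q (by omega) (by omega) (by omega)).trans (if_pos ‹_›)
    · exact (colour_zero_eq q (by omega) (by omega) (by omega)).trans (if_neg ‹_›)
    · rw [colour_zero_eq (q - 1) (by omega) (by omega : 2 * (n : ℤ) - 1 < 2 * n) (by linarith)]
      split_ifs <;> omega
  clear_value r q
  split_ifs at h0 h1 h2 <;> omega

def colourIndicator (n j : ℕ) (t : ℤ) : ℤ := if colour n 0 t = j then 1 else 0

lemma cartan_colour_zero (hn : 0 < n) {j : ℕ} (hj : j ≤ n) (t : ℤ) :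
    cartan n j (colour n 0 t) =
      2 * colourIndicator n j t - colourIndicator n j (t - 1) - colourIndicator n j (t + 1) := by
  unfold colourIndicator
  rcases colour_zero_neighbours hn t with
    ⟨h0, h1, h2⟩ | ⟨h0, h1, h2⟩ | ⟨h0, hlt, ⟨h1, h2⟩ | ⟨h1, h2⟩⟩ <;>
  · rw [h1, h2]
    generalize colour n 0 t = c at *
    simp only [cartan]
    split_ifs <;> omega

lemma YD.exists_gt_stable (Y : YD n k) (m : ℕ) :
    ∃ N, m < N ∧ ∀ r, N ≤ r → Y.y r = k := by
  obtain ⟨N, hN⟩ := Y.eventually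
  exact ⟨N + m + 1, by omega, fun r hr => hN r (by omega)⟩

lemma setOf_convexAt_eq_image (Y : YD n k) {N : ℕ} (hN : ∀ m, N ≤ m → Y.y m = k) (j : ℕ) :
    {p : ℕ × ℤ | ConvexAt Y p.1 p.2 ∧ colour n p.1 p.2 = j} =
      (((Finset.range N).filter fun m => Y.y m < Y.y (m + 1) ∧ colour n (m + 1) (Y.y m) = j).image
        fun m => (m + 1, Y.y m) : Finset (ℕ × ℤ)) := by
  ext ⟨l, z⟩
  simp only [ConvexAt, Finset.coe_image, Finset.coe_filter, Set.mem_image,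
    Finset.mem_range, Prod.mk.injEq]
  constructor
  · rintro ⟨⟨m, rfl, hlt, rfl⟩, hcol⟩
    refine ⟨m, ⟨?_, hlt, hcol⟩, rfl, rfl⟩
    by_contra! hm
    rw [hN m hm, hN (m + 1) (by omega)] at hlt
    exact lt_irrefl _ hlt
  · rintro ⟨m, ⟨-, hlt, hcol⟩, rfl, rfl⟩
    exact ⟨⟨m, rfl, hlt, rfl⟩, hcol⟩

lemma setOf_concaveAt_eq_image (Y : YD n k) {N : ℕ} (hN : ∀ m, N ≤ m → Y.y m = k)
    (j : ℕ) :
    {p : ℕ × ℤ | ConcaveAt Y p.1 p.2 ∧ colour n p.1 p.2 = j} =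
      (((Finset.range (N + 1)).filter fun m =>
          (m = 0 ∨ Y.y (m - 1) < Y.y m) ∧ colour n m (Y.y m) = j).image
        fun m => (m, Y.y m) : Finset (ℕ × ℤ)) := by
  ext ⟨l, z⟩
  simp only [ConcaveAt, Finset.coe_image, Finset.coe_filter, Set.mem_image,
    Finset.mem_range, Prod.mk.injEq]
  constructor
  · rintro ⟨⟨rfl, rfl⟩ | ⟨m, rfl, hlt, rfl⟩, hcol⟩
    · exact ⟨0, ⟨by omega, Or.inl rfl, hcol⟩, rfl, rfl⟩
    refine ⟨m + 1, ⟨?_, Or.inr hlt, hcol⟩, rfl, rfl⟩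
    by_contra! hm
    rw [hN m (by omega), hN (m + 1) (by omega)] at hlt
    exact lt_irrefl _ hlt
  · rintro ⟨m, ⟨-, hm | hlt, hcol⟩, rfl, rfl⟩
    · subst hm
      exact ⟨Or.inl ⟨rfl, rfl⟩, hcol⟩
    · rcases m with _ | m
      · exact absurd hlt (lt_irrefl _)
      · exact ⟨Or.inr ⟨m, rfl, hlt, rfl⟩, hcol⟩

lemma cc_sub_cx_eq_sum (Y : YD n k) {N : ℕ} (hN : ∀ m, N ≤ m → Y.y m = k) (j : ℕ) :
    (cc j Y : ℤ) - cx j Y = colourIndicator n j (N + k) +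
      ∑ m ∈ Finset.range N,
        (colourIndicator n j (m + Y.y m) - colourIndicator n j (m + 1 + Y.y m)) := by
  set c : ℕ → ℤ := fun m => colourIndicator n j (m + Y.y m)
  have hcx : (cx j Y : ℤ) = ∑ m ∈ Finset.range N,
      if Y.y m < Y.y (m + 1) then colourIndicator n j (m + 1 + Y.y m) else 0 := by
    rw [cx, setOf_convexAt_eq_image Y hN, Set.ncard_coe_finset,
      Finset.card_image_of_injective _ fun a b h => by simpa using congrArg Prod.fst h,
      Finset.card_filter]
    push_cast
    refine Finset.sum_congr rfl fun m _ => ?_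
    rw [colour_eq_colour_zero, ite_and, colourIndicator]
    push_cast
    rfl
  have hcc : (cc j Y : ℤ) = c 0 + ∑ m ∈ Finset.range N,
      if Y.y m < Y.y (m + 1) then c (m + 1) else 0 := by
    rw [cc, setOf_concaveAt_eq_image Y hN, Set.ncard_coe_finset,
      Finset.card_image_of_injective _ fun a b h => by simpa using congrArg Prod.fst h,
      Finset.card_filter, Finset.sum_range_succ']
    push_cast
    rw [add_comm]
    congr 1
    · simp [c, colourIndicator]
    · refine Finset.sum_congr rfl fun m _ => ?_
      simp [c, colourIndicator, colour_eq_colour_zero (m + 1), ite_and]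
  have hterm : ∀ m, (if Y.y m < Y.y (m + 1) then c (m + 1) else 0) -
      (if Y.y m < Y.y (m + 1) then colourIndicator n j (m + 1 + Y.y m) else 0) =
      c (m + 1) - colourIndicator n j (m + 1 + Y.y m) := by
    intro m
    split_ifs with hlt
    · rfl
    · have : Y.y m = Y.y (m + 1) := le_antisymm (Y.mono m.le_succ) (not_lt.1 hlt)
      simp [c, this]
  have htel := Finset.sum_range_sub c N
  have hcN : c N = colourIndicator n j (N + k) := by simp [c, hN N le_rfl]
  rw [hcc, hcx, add_sub_assoc, ← Finset.sum_sub_distrib, Finset.sum_congr rfl fun m _ => hterm m,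
    ← hcN, ← sub_add_cancel (c N) (c 0), ← htel, add_right_comm,
    ← Finset.sum_add_distrib, add_comm (c 0)]
  refine congrArg (· + c 0) (Finset.sum_congr rfl fun m _ => ?_)
  show _ = _ - c m + (c m - _)
  ring

lemma removeY_y {Y : YD n k} {m : ℕ} {z : ℤ} (h : ConvexAt Y (m + 1) z) :
    (removeY Y (m + 1) z h).y = Function.update Y.y m (Y.y m + 1) := rfl

lemma cc_sub_cx_removeY (hn : 0 < n) {j : ℕ} (hj : j ≤ n) (Y : YD n k) {l : ℕ} {z : ℤ}
    (h : ConvexAt Y l z) :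
    (cc j (removeY Y l z h) : ℤ) - cx j (removeY Y l z h) =
      cartan n j (colour n l z) + ((cc j Y : ℤ) - cx j Y) := by
  obtain ⟨m, rfl, -, rfl⟩ := id h
  obtain ⟨N, hmN, hN⟩ := YD.exists_gt_stable Y m
  have hy := removeY_y h
  have hN' : ∀ r, N ≤ r → (removeY Y (m + 1) (Y.y m) h).y r = k := fun r hr => by
    rw [hy, Function.update_of_ne (by omega), hN r hr]
  have hmem : m ∈ Finset.range N := Finset.mem_range.2 hmN
  rw [cc_sub_cx_eq_sum _ hN', cc_sub_cx_eq_sum _ hN, ← Finset.add_sum_erase _ _ hmem,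
    ← Finset.add_sum_erase _ _ hmem, colour_eq_colour_zero,
    cartan_colour_zero hn hj, hy, Function.update_self]
  have hrest : ∀ r ∈ (Finset.range N).erase m, Function.update Y.y m (Y.y m + 1) r = Y.y r :=
    fun r hr => Function.update_of_ne (Finset.ne_of_mem_erase hr) _ _
  rw [Finset.sum_congr rfl fun r hr => by rw [hrest r hr]]
  push_cast
  ring_nf

lemma boxes_finite (Y : YD n k) (j : ℕ) :
    {p : ℕ × ℤ | Y.y p.1 < p.2 ∧ p.2 ≤ k ∧ colour n p.1 p.2 = j}.Finite := by
  obtain ⟨N, -, hN⟩ := YD.exists_gt_stable Y 0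
  refine (Finset.range N ×ˢ Finset.Icc (Y.y 0) k).finite_toSet.subset ?_
  rintro ⟨l, z⟩ ⟨hlz, hzk, -⟩
  have hl : l < N := by
    by_contra! hl
    rw [hN l hl] at hlz
    omega
  simpa [hl, hzk] using (Y.mono l.zero_le).trans hlz.le

lemma boxes_removeY (Y : YD n k) (j : ℕ) {l : ℕ} {z : ℤ} (h : ConvexAt Y l z) :
    boxes j Y = boxes j (removeY Y l z h) + if colour n l z = j then 1 else 0 := by
  obtain ⟨m, rfl, hlt, rfl⟩ := id h
  have hy := removeY_y h
  have hcol : colour n m (Y.y m + 1) = colour n (m + 1) (Y.y m) := by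
    rw [colour_eq_colour_zero, colour_eq_colour_zero (m + 1)]
    congr 1
    push_cast
    ring
  have hk : Y.y m + 1 ≤ k := by
    obtain ⟨N, hmN, hN⟩ := YD.exists_gt_stable Y (m + 1)
    have := Y.mono hmN.le
    rw [hN N le_rfl] at this
    omega
  have hset : {p : ℕ × ℤ | Y.y p.1 < p.2 ∧ p.2 ≤ k ∧ colour n p.1 p.2 = j} =
      {p | (removeY Y (m + 1) (Y.y m) h).y p.1 < p.2 ∧ p.2 ≤ (k : ℤ) ∧
          colour n p.1 p.2 = j} ∪
        {p | p = (m, Y.y m + 1) ∧ colour n (m + 1) (Y.y m) = j} := by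
    ext ⟨r, z⟩
    simp only [Set.mem_union, Set.mem_ofPred_eq, hy, Prod.mk.injEq]
    rcases eq_or_ne r m with rfl | hr
    · simp only [Function.update_self, true_and]
      constructor
      · rintro ⟨hlt, hz, hc⟩
        rcases eq_or_ne z (Y.y r + 1) with rfl | hne
        · exact Or.inr ⟨rfl, hcol ▸ hc⟩
        · exact Or.inl ⟨by omega, hz, hc⟩
      · rintro (⟨hlt, hz, hc⟩ | ⟨rfl, hc⟩)
        · exact ⟨by omega, hz, hc⟩
        · exact ⟨by omega, hk, hcol ▸ hc⟩
    · simp [hr]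
  rw [boxes, boxes, hset, Set.ncard_union_eq ?_ (boxes_finite _ j)
    ((Set.finite_singleton _).subset fun _ hp => hp.1)]
  · split_ifs with hc <;> simp [hc]
  · rw [Set.disjoint_right]
    rintro _ ⟨rfl, -⟩ ⟨hlt', -⟩
    simp [hy] at hlt'

lemma lift_fockB (g : YD n k → Fock n k) (Y : YD n k) : lift g (fockB Y) = g Y := by
  simp [lift, fockB]

lemma fock_ext {φ ψ : Fock n k →ₗ[Kq] Fock n k} (h : ∀ Y, φ (fockB Y) = ψ (fockB Y)) :
    φ = ψ :=
  Finsupp.lhom_ext' fun Y => LinearMap.ext_ring (h Y)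

def diagOp (w : YD n k → Kq) : Fock n k →ₗ[Kq] Fock n k :=
  lift fun Y => w Y • fockB Y

lemma diagOp_comp_Ei {i : ℕ} {w : YD n k → Kq} {c : Kq}
    (hw : ∀ (Y : YD n k) (l : ℕ) (z : ℤ) (h : ConvexAt Y l z), colour n l z = i →
      w (removeY Y l z h) = c * w Y) :
    diagOp w ∘ₗ Ei n k i = c • (Ei n k i ∘ₗ diagOp w) := by
  refine fock_ext fun Y => ?_
  obtain ⟨N, -, hN⟩ := YD.exists_gt_stable Y 0
  have hfin : (Function.support fun p : ℕ × ℤ =>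
      if h : ConvexAt Y p.1 p.2 ∧ colour n p.1 p.2 = i then
        (qi n i ^ aExp i p.1 p.2 Y) • fockB (removeY Y p.1 p.2 h.1)
      else 0).Finite := by
    refine (setOf_convexAt_eq_image Y hN i ▸ Finset.finite_toSet _).subset fun p hp => ?_
    by_contra h
    exact hp (dif_neg h)
  simp only [LinearMap.comp_apply, LinearMap.smul_apply, diagOp, Ei, lift_fockB, map_smul,
    map_finsum _ hfin, smul_finsum, smul_smul]
  refine finsum_congr fun p => ?_
  split_ifs with h
  · rw [map_smul, lift_fockB, hw Y p.1 p.2 h.1 h.2, smul_smul, smul_smul, mul_comm]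
  · rw [map_zero, smul_zero]

lemma Tplus_comp_Ei (hn : 0 < n) {i j : ℕ} (hj : j ≤ n) :
    Tplus n k j ∘ₗ Ei n k i =
      (fq ^ ((sg n j : ℤ) * cartan n j i)) • (Ei n k i ∘ₗ Tplus n k j) := by
  refine diagOp_comp_Ei fun Y l z h hi => ?_
  have hq : qi n j ≠ 0 := pow_ne_zero _ RatFunc.X_ne_zero
  rw [cc_sub_cx_removeY hn hj Y h, zpow_add₀ hq, hi, qi, ← zpow_natCast, ← zpow_mul]

lemma Td_comp_Ei (i : ℕ) :
    Td n k ∘ₗ Ei n k i =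
      (fq ^ (if i = 0 then (1 : ℤ) else 0)) • (Ei n k i ∘ₗ Td n k) := by
  refine diagOp_comp_Ei fun Y l z h hi => ?_
  rw [boxes_removeY Y 0 h, hi, ← zpow_add₀ RatFunc.X_ne_zero]
  congr 1
  split_ifs <;> push_cast <;> ring

theorem fock_Tplus_Td_Ei_comm_general (n : ℕ) (hn : 2 ≤ n) (k i j : ℕ)
    (hj : j ≤ n) :
    Tplus n k j ∘ₗ Ei n k i = (fq ^ ((sg n j : ℤ) * cartan n j i)) • (Ei n k i ∘ₗ Tplus n k j) ∧
    Td n k ∘ₗ Ei n k i = (fq ^ (if i = 0 then (1 : ℤ) else 0)) • (Ei n k i ∘ₗ Td n k) :=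
  ⟨Tplus_comp_Ei (by omega) hj, Td_comp_Ei i⟩

/-- For every `k ∈ I` and all `i, j ∈ I`, on the Fock space `F(Λ_k)` we have
`T_j⁺ ∘ E_i = q^{s_j a_{ji}} • (E_i ∘ T_j⁺)` and `T_d ∘ E_i = q^{δ_{0i}} • (E_i ∘ T_d)`. -/
theorem fock_Tplus_Td_Ei_comm (n : ℕ) (hn : 2 ≤ n) (k i j : ℕ)
    (hk : k ≤ n) (hi : i ≤ n) (hj : j ≤ n) :
    Tplus n k j ∘ₗ Ei n k i = (fq ^ ((sg n j : ℤ) * cartan n j i)) • (Ei n k i ∘ₗ Tplus n k j) ∧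
    Td n k ∘ₗ Ei n k i = (fq ^ (if i = 0 then (1 : ℤ) else 0)) • (Ei n k i ∘ₗ Td n k) :=
  fock_Tplus_Td_Ei_comm_general n hn k i j hj

end
end

section
/- Let (l,y) be a site of colour i and (l₁,y₁) a site of colour j with (l₁,y₁) ≠ (l−1, y+1), and let Y be a Young diagram of charge k having a convex corner at (l,y) and a concave corner at (l₁,y₁). If either a_{ij} = 0 and i ≠ j, or (l₁,y₁) < (l,y), then a(i,l,y, F_{(l₁,y₁)}Y) = a(i,l,y, Y) and b(j,l₁,y₁, Y) = b(j,l₁,y₁, E_{(l,y)}Y), where F_{(l₁,y₁)}Y is Y with a box added at the concave corner at (l₁,y₁) and E_{(l,y)}Y is Y with the convex corner at (l,y) removed. -/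
open scoped Classical

noncomputable section

variable {n k : ℕ}

/-! Adding a box at a corner of diagonal `d` only changes the corners on the diagonals
`d - 1`, `d`, `d + 1`, and the same holds for removing one. In the ordered case these
diagonals lie on the wrong side of the site at which `a` (resp. `b`) is evaluated. In the
case `a_{ij} = 0`, `i ≠ j`, the colours `i` and `j` are neither equal nor adjacent, whereas
sites on neighbouring diagonals have equal or adjacent colours, so no corner of the
relevant colour lies on those three diagonals. -/

lemma ConcaveAt.y_eq {Y : YD n k} {l : ℕ} {z : ℤ} (h : ConcaveAt Y l z) : Y.y l = z := by
  rcases h with ⟨rfl, rfl⟩ | ⟨m, rfl, -, rfl⟩ <;> rfl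

lemma ConvexAt.y_pred_eq {Y : YD n k} {l : ℕ} {z : ℤ} (h : ConvexAt Y l z) :
    1 ≤ l ∧ Y.y (l - 1) = z := by
  obtain ⟨m, rfl, -, rfl⟩ := h
  exact ⟨by omega, rfl⟩

/-- `Y'` is `Y` with one box added in column `t`. -/
def BoxAdded (Y Y' : YD n k) (t : ℕ) : Prop :=
  (∀ r ≠ t, Y'.y r = Y.y r) ∧ Y'.y t + 1 = Y.y t

lemma boxAdded_addY {Y : YD n k} {l : ℕ} {z : ℤ} (hc : ConcaveAt Y l z) :
    BoxAdded Y (addY Y l z hc) l :=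
  ⟨fun _ hr => Function.update_of_ne hr _ _, by simp [addY]⟩

lemma boxAdded_removeY {Y : YD n k} {l : ℕ} {z : ℤ} (hx : ConvexAt Y l z) :
    BoxAdded (removeY Y l z hx) Y (l - 1) :=
  ⟨fun _ hr => (Function.update_of_ne hr _ _).symm, by simp [removeY]⟩

section Locality

variable {Y Y' : YD n k} {t m : ℕ} {w : ℤ}

lemma concaveAt_of_eq_off (hoff : ∀ r ≠ t, Y'.y r = Y.y r)
    (hfar : (m : ℤ) + w < t + min (Y.y t) (Y'.y t) ∨ (t : ℤ) + max (Y.y t) (Y'.y t) + 1 < m + w)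
    (h : ConcaveAt Y m w) : ConcaveAt Y' m w := by
  rcases h with ⟨rfl, rfl⟩ | ⟨r, rfl, hlt, rfl⟩
  · rcases eq_or_ne 0 t with rfl | h0
    · omega
    · exact Or.inl ⟨rfl, (hoff 0 h0).symm⟩
  · have hr1 : r + 1 ≠ t := by rintro rfl; omega
    refine Or.inr ⟨r, rfl, ?_, (hoff _ hr1).symm⟩
    rw [hoff _ hr1]
    rcases eq_or_ne r t with rfl | hr
    · omega
    · rwa [hoff r hr]

lemma convexAt_of_eq_off (hoff : ∀ r ≠ t, Y'.y r = Y.y r)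
    (hfar : (m : ℤ) + w < t + min (Y.y t) (Y'.y t) ∨ (t : ℤ) + max (Y.y t) (Y'.y t) + 1 < m + w)
    (h : ConvexAt Y m w) : ConvexAt Y' m w := by
  obtain ⟨r, rfl, hlt, rfl⟩ := h
  have hr : r ≠ t := by rintro rfl; omega
  refine ⟨r, rfl, ?_, (hoff r hr).symm⟩
  rw [hoff r hr]
  rcases eq_or_ne (r + 1) t with rfl | hr1
  · omega
  · rwa [hoff _ hr1]

lemma concaveAt_iff_of_boxAdded (hY : BoxAdded Y Y' t) (hfar : 2 ≤ |(m : ℤ) + w - (t + Y.y t)|) :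
    ConcaveAt Y' m w ↔ ConcaveAt Y m w := by
  obtain ⟨hoff, hstep⟩ := hY
  rw [le_abs] at hfar
  refine ⟨concaveAt_of_eq_off (fun r hr => (hoff r hr).symm) ?_,
    concaveAt_of_eq_off hoff ?_⟩ <;> omega

lemma convexAt_iff_of_boxAdded (hY : BoxAdded Y Y' t) (hfar : 2 ≤ |(m : ℤ) + w - (t + Y.y t)|) :
    ConvexAt Y' m w ↔ ConvexAt Y m w := by
  obtain ⟨hoff, hstep⟩ := hY
  rw [le_abs] at hfar
  refine ⟨convexAt_of_eq_off (fun r hr => (hoff r hr).symm) ?_,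
    convexAt_of_eq_off hoff ?_⟩ <;> omega

end Locality

lemma aExp_congr {i l : ℕ} {z : ℤ} {Y Y' : YD n k}
    (h : ∀ (m : ℕ) (w : ℤ), colour n m w = i → (l : ℤ) + z < m + w →
      (ConcaveAt Y m w ↔ ConcaveAt Y' m w) ∧ (ConvexAt Y m w ↔ ConvexAt Y' m w)) :
    aExp i l z Y = aExp i l z Y' := by
  have hcc : {p : ℕ × ℤ | ConcaveAt Y p.1 p.2 ∧ colour n p.1 p.2 = i ∧
      (l : ℤ) + z < (p.1 : ℤ) + p.2} = {p : ℕ × ℤ | ConcaveAt Y' p.1 p.2 ∧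
      colour n p.1 p.2 = i ∧ (l : ℤ) + z < (p.1 : ℤ) + p.2} := by
    ext ⟨m, w⟩
    exact and_congr_left fun ⟨hcol, hgt⟩ => (h m w hcol hgt).1
  have hcx : {p : ℕ × ℤ | ConvexAt Y p.1 p.2 ∧ colour n p.1 p.2 = i ∧
      (l : ℤ) + z < (p.1 : ℤ) + p.2} = {p : ℕ × ℤ | ConvexAt Y' p.1 p.2 ∧
      colour n p.1 p.2 = i ∧ (l : ℤ) + z < (p.1 : ℤ) + p.2} := by
    ext ⟨m, w⟩
    exact and_congr_left fun ⟨hcol, hgt⟩ => (h m w hcol hgt).2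
  rw [aExp, aExp, hcc, hcx]

lemma bExp_congr {i l : ℕ} {z : ℤ} {Y Y' : YD n k}
    (h : ∀ (m : ℕ) (w : ℤ), colour n m w = i → (m : ℤ) + w < l + z →
      (ConcaveAt Y m w ↔ ConcaveAt Y' m w) ∧ (ConvexAt Y m w ↔ ConvexAt Y' m w)) :
    bExp i l z Y = bExp i l z Y' := by
  have hcc : {p : ℕ × ℤ | ConcaveAt Y p.1 p.2 ∧ colour n p.1 p.2 = i ∧
      (p.1 : ℤ) + p.2 < (l : ℤ) + z} = {p : ℕ × ℤ | ConcaveAt Y' p.1 p.2 ∧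
      colour n p.1 p.2 = i ∧ (p.1 : ℤ) + p.2 < (l : ℤ) + z} := by
    ext ⟨m, w⟩
    exact and_congr_left fun ⟨hcol, hlt⟩ => (h m w hcol hlt).1
  have hcx : {p : ℕ × ℤ | ConvexAt Y p.1 p.2 ∧ colour n p.1 p.2 = i ∧
      (p.1 : ℤ) + p.2 < (l : ℤ) + z} = {p : ℕ × ℤ | ConvexAt Y' p.1 p.2 ∧
      colour n p.1 p.2 = i ∧ (p.1 : ℤ) + p.2 < (l : ℤ) + z} := by
    ext ⟨m, w⟩
    exact and_congr_left fun ⟨hcol, hlt⟩ => (h m w hcol hlt).2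
  rw [bExp, bExp, hcc, hcx]

lemma colour_eq_of_diag_eq {l l' : ℕ} {z z' : ℤ} (h : (l : ℤ) + z = l' + z') :
    colour n l z = colour n l' z' := by
  simp only [colour, h]

lemma abs_colour_sub_le_one_of_diag_succ {l l' : ℕ} {z z' : ℤ} (h : (l : ℤ) + z + 1 = l' + z') :
    |(colour n l' z' : ℤ) - colour n l z| ≤ 1 := by
  simp only [colour, abs_le]
  rcases Nat.eq_zero_or_pos n with rfl | hn
  · simp only [CharP.cast_eq_zero, mul_zero, Int.emod_zero]
    split_ifs <;> omega
  set N : ℤ := 2 * n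
  set s : ℤ := l + z
  have hr := Int.emod_nonneg s (show N ≠ 0 by omega)
  have hr' := Int.emod_lt_of_pos s (show 0 < N by omega)
  have hsucc : ((l' : ℤ) + z') % N = s % N + 1 ∨ ((l' : ℤ) + z') % N = 0 ∧ s % N + 1 = N := by
    rw [← h, ← Int.emod_add_emod]
    rcases (show s % N + 1 < N ∨ s % N + 1 = N by omega) with hlt | heq
    · exact Or.inl (Int.emod_eq_of_lt (by omega) hlt)
    · exact Or.inr ⟨by rw [heq, Int.emod_self], heq⟩
  rcases hsucc with e | ⟨e, hwrap⟩ <;> rw [e] <;> split_ifs <;> omega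

lemma abs_colour_sub_le_one {l l' : ℕ} {z z' : ℤ} (h : |(l : ℤ) + z - (l' + z')| ≤ 1) :
    |(colour n l z : ℤ) - colour n l' z'| ≤ 1 := by
  rcases (show (l : ℤ) + z + 1 = l' + z' ∨ (l : ℤ) + z = l' + z' ∨ (l' : ℤ) + z' + 1 = l + z by
    rw [abs_le] at h; omega) with h' | h' | h'
  · rw [abs_sub_comm]; exact abs_colour_sub_le_one_of_diag_succ h'
  · simp [colour_eq_of_diag_eq h']
  · exact abs_colour_sub_le_one_of_diag_succ h'

lemma two_le_abs_sub_of_cartan_eq_zero {i j : ℕ} (h : cartan n i j = 0) :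
    2 ≤ |(i : ℤ) - j| := by
  rw [le_abs]
  unfold cartan at h
  split_ifs at h <;> omega

lemma two_le_abs_diag_sub_of_cartan_eq_zero {l l' : ℕ} {z z' : ℤ}
    (h : cartan n (colour n l z) (colour n l' z') = 0) :
    2 ≤ |(l : ℤ) + z - (l' + z')| := by
  by_contra hlt
  have := abs_colour_sub_le_one (n := n) (show |(l : ℤ) + z - (l' + z')| ≤ 1 by omega)
  have := two_le_abs_sub_of_cartan_eq_zero h
  omega

theorem aExp_bExp_unchanged_general (n : ℕ) (k i j l l₁ : ℕ) (z z₁ : ℤ)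
    (hci : colour n l z = i) (hcj : colour n l₁ z₁ = j)
    (Y : YD n k) (hx : ConvexAt Y l z) (hc : ConcaveAt Y l₁ z₁)
    (hcase : (cartan n i j = 0 ∧ i ≠ j) ∨ (l₁ : ℤ) + z₁ < (l : ℤ) + z) :
    aExp i l z (addY Y l₁ z₁ hc) = aExp i l z Y ∧
    bExp j l₁ z₁ Y = bExp j l₁ z₁ (removeY Y l z hx) := by
  have hA := boxAdded_addY hc
  have hR := boxAdded_removeY hx
  obtain ⟨hl, hz⟩ := hx.y_pred_eq
  constructor
  · refine aExp_congr fun m w hcol hgt => ?_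
    have hfar : 2 ≤ |(m : ℤ) + w - (l₁ + Y.y l₁)| := by
      rw [hc.y_eq]
      rcases hcase with ⟨hcartan, -⟩ | hlt
      · exact two_le_abs_diag_sub_of_cartan_eq_zero (hcol ▸ hcj ▸ hcartan)
      · exact le_abs.2 (Or.inl (by omega))
    exact ⟨concaveAt_iff_of_boxAdded hA hfar, convexAt_iff_of_boxAdded hA hfar⟩
  · refine bExp_congr fun m w hcol hlt => ?_
    have hfar : 2 ≤ |(m : ℤ) + w - ((l - 1 : ℕ) + (removeY Y l z hx).y (l - 1))| := by
      rw [← hR.2, hz, show ((l - 1 : ℕ) : ℤ) + (z + 1) = l + z by omega, abs_sub_comm]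
      rcases hcase with ⟨hcartan, -⟩ | hlt'
      · exact two_le_abs_diag_sub_of_cartan_eq_zero (hci ▸ hcol ▸ hcartan)
      · exact le_abs.2 (Or.inl (by omega))
    exact ⟨concaveAt_iff_of_boxAdded hR hfar, convexAt_iff_of_boxAdded hR hfar⟩

/-- Let `(l,z)` be a site of colour `i` and `(l₁,z₁)` a site of colour `j` with
`(l₁,z₁) ≠ (l-1, z+1)`, and let `Y` have a convex corner at `(l,z)` and a concave corner at
`(l₁,z₁)`. If `a_{ij} = 0` and `i ≠ j`, or `(l₁,z₁) < (l,z)`, then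
`a(i,l,z, F_{(l₁,z₁)}Y) = a(i,l,z,Y)` and `b(j,l₁,z₁,Y) = b(j,l₁,z₁, E_{(l,z)}Y)`. -/
theorem aExp_bExp_unchanged (n : ℕ) (hn : 2 ≤ n) (k i j l l₁ : ℕ) (z z₁ : ℤ)
    (hk : k ≤ n) (hi : i ≤ n) (hj : j ≤ n)
    (hci : colour n l z = i) (hcj : colour n l₁ z₁ = j)
    (hne : ¬(l₁ + 1 = l ∧ z₁ = z + 1))
    (Y : YD n k) (hx : ConvexAt Y l z) (hc : ConcaveAt Y l₁ z₁)
    (hcase : (cartan n i j = 0 ∧ i ≠ j) ∨ (l₁ : ℤ) + z₁ < (l : ℤ) + z) :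
    aExp i l z (addY Y l₁ z₁ hc) = aExp i l z Y ∧
    bExp j l₁ z₁ Y = bExp j l₁ z₁ (removeY Y l z hx) :=
  aExp_bExp_unchanged_general n k i j l l₁ z z₁ hci hcj Y hx hc hcase

end
end

section
/- For every k ∈ I, every i ∈ I and all Young diagrams Y and Y′ of charge k: f̃_i Y = Y′ if and only if ẽ_i Y′ = Y. -/
open scoped Classical

noncomputable section

variable {n k : ℕ}

/-!
Adding the box at an `i`-coloured concave corner `p = (l, y_l)` changes corners only on the
diagonal of `p` and the two adjacent ones, and sites on adjacent diagonals have colours of the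
other parity. So the `i`-signature of `Y' = Y + p` is that of `Y` with the entry `0` at `p`
replaced by an entry `1` at `q = (l + 1, y_l - 1)`: the signatures are `A 0 B` and `A 1 B`.
Reduction may be carried out on `A` and `B` first, and always ends in a word `1⋯1 0⋯0`. Hence
`p` is the first surviving `0` of `A 0 B`, and `q` the last surviving `1` of `A 1 B`, under one
and the same condition: `A` reduces to no `0` and `B` reduces to no `1`.
-/

section Signature

def reduceStep (x : (ℕ × ℤ) × Bool) (acc : List ((ℕ × ℤ) × Bool)) : List ((ℕ × ℤ) × Bool) :=
  if x.2 = false ∧ acc.head?.map Prod.snd = some true then acc.tail else x :: acc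

variable {A B T F acc : List ((ℕ × ℤ) × Bool)} {x t : (ℕ × ℤ) × Bool}

theorem reduceSig_cons : reduceSig (x :: A) = reduceStep x (reduceSig A) := rfl

theorem reduceSig_append : reduceSig (A ++ B) = A.foldr reduceStep (reduceSig B) :=
  List.foldr_append

theorem reduceStep_of_snd_true (hx : x.2 = true) : reduceStep x acc = x :: acc := by
  simp [reduceStep, hx]

theorem reduceStep_cons_of_snd_false (hx : x.2 = false) (ht : t.2 = true) :
    reduceStep x (t :: acc) = acc := by
  simp [reduceStep, hx, ht]

theorem reduceStep_of_forall_false (hacc : ∀ y ∈ acc, y.2 = false) :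
    reduceStep x acc = x :: acc := by
  cases acc with
  | nil => simp [reduceStep]
  | cons a acc => simp [reduceStep, hacc a List.mem_cons_self]

theorem reduceStep_append_of_forall_false (hF : ∀ y ∈ F, y.2 = false) :
    reduceStep x (acc ++ F) = reduceStep x acc ++ F := by
  cases acc with
  | nil =>
    rw [List.nil_append, reduceStep_of_forall_false hF, reduceStep_of_forall_false (by simp)]
    rfl
  | cons a acc => by_cases h : x.2 = false ∧ a.2 = true <;> simp [reduceStep, h]

theorem foldr_reduceStep_append_of_forall_false (hF : ∀ y ∈ F, y.2 = false) :
    A.foldr reduceStep (acc ++ F) = A.foldr reduceStep acc ++ F := by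
  induction A with
  | nil => rfl
  | cons x A ih => simp only [List.foldr_cons, ih, reduceStep_append_of_forall_false hF]

theorem foldr_reduceStep_of_forall_true (hT : ∀ y ∈ T, y.2 = true) :
    T.foldr reduceStep acc = T ++ acc := by
  induction T with
  | nil => rfl
  | cons t T ih =>
    rw [List.foldr_cons, ih fun y hy => hT y (List.mem_cons_of_mem t hy),
      reduceStep_of_snd_true (hT t List.mem_cons_self), List.cons_append]

theorem foldr_reduceStep_of_forall_false (hF : ∀ y ∈ F, y.2 = false)
    (hacc : ∀ y ∈ acc, y.2 = false) : F.foldr reduceStep acc = F ++ acc := by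
  induction F with
  | nil => rfl
  | cons f F ih =>
    have hF' : ∀ y ∈ F, y.2 = false := fun y hy => hF y (List.mem_cons_of_mem f hy)
    rw [List.foldr_cons, ih hF', reduceStep_of_forall_false, List.cons_append]
    simpa [or_imp, forall_and] using And.intro hF' hacc

theorem foldr_reduceStep_sublist : (A.foldr reduceStep acc).Sublist (A ++ acc) := by
  induction A with
  | nil => exact List.Sublist.refl acc
  | cons x A ih =>
    rw [List.foldr_cons, reduceStep]
    split
    · exact (List.tail_sublist _).trans (ih.trans (List.sublist_cons_self x _))
    · exact ih.cons_cons x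

theorem reduceSig_sublist : (reduceSig A).Sublist A := by
  have h := foldr_reduceStep_sublist (A := A) (acc := [])
  rwa [List.append_nil] at h

theorem exists_reduceSig_eq_append (A : List ((ℕ × ℤ) × Bool)) :
    ∃ T F, reduceSig A = T ++ F ∧ (∀ y ∈ T, y.2 = true) ∧ ∀ y ∈ F, y.2 = false := by
  induction A with
  | nil => exact ⟨[], [], rfl, by simp, by simp⟩
  | cons x A ih =>
    obtain ⟨T, F, hA, hT, hF⟩ := ih
    rw [reduceSig_cons, hA]
    cases hx : x.2 with
    | true =>
      refine ⟨x :: T, F, by rw [reduceStep_of_snd_true hx, List.cons_append], ?_, hF⟩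
      simpa [hx] using hT
    | false =>
      cases T with
      | nil =>
        refine ⟨[], x :: F, reduceStep_of_forall_false hF, by simp, ?_⟩
        simpa [hx] using hF
      | cons t T =>
        refine ⟨T, F, reduceStep_cons_of_snd_false hx (hT t List.mem_cons_self), ?_, hF⟩
        exact fun y hy => hT y (List.mem_cons_of_mem t hy)

theorem foldr_reduceStep_reduceSig :
    (reduceSig A).foldr reduceStep acc = A.foldr reduceStep acc := by
  induction A with
  | nil => rfl
  | cons x A ih =>
    rw [reduceSig_cons, List.foldr_cons, ← ih, reduceStep]
    split
    case isTrue h =>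
      obtain ⟨hx, hhead⟩ := h
      obtain ⟨t, R, hR, ht⟩ : ∃ t R, reduceSig A = t :: R ∧ t.2 = true := by
        cases hA : reduceSig A with
        | nil => simp [hA] at hhead
        | cons t R => exact ⟨t, R, rfl, by simpa [hA] using hhead⟩
      rw [hR, List.tail_cons, List.foldr_cons, reduceStep_of_snd_true ht,
        reduceStep_cons_of_snd_false hx ht]
    case isFalse => rfl

theorem forall_snd_true_append_iff (hT : ∀ y ∈ T, y.2 = true) (hF : ∀ y ∈ F, y.2 = false) :
    (∀ y ∈ T ++ F, y.2 = true) ↔ F = [] := by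
  refine ⟨fun h => List.eq_nil_iff_forall_not_mem.2 fun y hy => ?_, fun h => by simpa [h] using hT⟩
  simpa [hF y hy] using h y (List.mem_append_right T hy)

theorem forall_snd_false_append_iff (hT : ∀ y ∈ T, y.2 = true) (hF : ∀ y ∈ F, y.2 = false) :
    (∀ y ∈ T ++ F, y.2 = false) ↔ T = [] := by
  refine ⟨fun h => List.eq_nil_iff_forall_not_mem.2 fun y hy => ?_, fun h => by simpa [h] using hF⟩
  simpa [hT y hy] using h y (List.mem_append_left F hy)

theorem foldr_reduceStep_eq_append (hA : reduceSig A = T ++ F) (hT : ∀ y ∈ T, y.2 = true) :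
    A.foldr reduceStep acc = T ++ F.foldr reduceStep acc := by
  rw [← foldr_reduceStep_reduceSig, hA, List.foldr_append, foldr_reduceStep_of_forall_true hT]

theorem find?_reduceSig_append_false_eq_some_iff {p : ℕ × ℤ}
    (hA : ∀ y ∈ A, y.1 ≠ p) (hB : ∀ y ∈ B, y.1 ≠ p) :
    ((reduceSig (A ++ (p, false) :: B)).find? (fun y => !y.2)).map Prod.fst = some p ↔
      (∀ y ∈ reduceSig A, y.2 = true) ∧ ∀ y ∈ reduceSig B, y.2 = false := by
  obtain ⟨TA, FA, hRA, hTA, hFA⟩ := exists_reduceSig_eq_append A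
  obtain ⟨TB, FB, hRB, hTB, hFB⟩ := exists_reduceSig_eq_append B
  have hsubA : TA ++ FA ⊆ A := hRA ▸ reduceSig_sublist.subset
  have hsubB : TB ++ FB ⊆ B := hRB ▸ reduceSig_sublist.subset
  rw [reduceSig_append, reduceSig_cons, hRB, foldr_reduceStep_eq_append hRA hTA, hRA,
    forall_snd_true_append_iff hTA hFA, forall_snd_false_append_iff hTB hFB,
    List.find?_append, List.find?_eq_none.2 (by simpa using hTA), Option.none_or]
  rcases TB with _ | ⟨t, TB⟩
  · rw [List.nil_append, reduceStep_of_forall_false hFB,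
      foldr_reduceStep_of_forall_false hFA (by simpa using hFB)]
    rcases FA with _ | ⟨f, FA⟩
    · simp
    · have hf : f.1 ≠ p := hA f (hsubA (by simp))
      simp [hFA f List.mem_cons_self, hf]
  · -- the first `1` surviving in `B` cancels `p`
    rw [List.cons_append, reduceStep_cons_of_snd_false rfl (hTB t List.mem_cons_self)]
    simp only [reduceCtorEq, and_false, iff_false]
    intro h
    obtain ⟨y, hy, rfl⟩ := Option.map_eq_some_iff.1 h
    rcases List.mem_append.1 (foldr_reduceStep_sublist.subset (List.mem_of_find?_eq_some hy))
      with hyA | hyB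
    · exact hA y (hsubA (List.mem_append_right TA hyA)) rfl
    · exact hB y (hsubB (List.mem_cons_of_mem t hyB)) rfl

theorem getLast?_filter_reduceSig_append_true_eq_some_iff {q : ℕ × ℤ}
    (hA : ∀ y ∈ A, y.1 ≠ q) (hB : ∀ y ∈ B, y.1 ≠ q) :
    (((reduceSig (A ++ (q, true) :: B)).filter (fun y => y.2)).getLast?).map Prod.fst = some q ↔
      (∀ y ∈ reduceSig A, y.2 = true) ∧ ∀ y ∈ reduceSig B, y.2 = false := by
  obtain ⟨TA, FA, hRA, hTA, hFA⟩ := exists_reduceSig_eq_append A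
  obtain ⟨TB, FB, hRB, hTB, hFB⟩ := exists_reduceSig_eq_append B
  have hsubA : TA ++ FA ⊆ A := hRA ▸ reduceSig_sublist.subset
  have hsubB : TB ++ FB ⊆ B := hRB ▸ reduceSig_sublist.subset
  have hFB' : FB.filter (fun y => y.2) = [] := List.filter_eq_nil_iff.2 (by simpa using hFB)
  rw [reduceSig_append, reduceSig_cons, reduceStep_of_snd_true rfl, hRB, ← List.cons_append,
    foldr_reduceStep_eq_append hRA hTA, foldr_reduceStep_append_of_forall_false hFB, hRA,
    forall_snd_true_append_iff hTA hFA, forall_snd_false_append_iff hTB hFB,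
    List.filter_append, List.filter_append, List.filter_eq_self.2 (by simpa using hTA), hFB',
    List.append_nil]
  rcases List.eq_nil_or_concat FA with rfl | ⟨FA, f, rfl⟩
  · rw [List.foldr_nil, List.filter_eq_self.2 (by simpa using hTB)]
    rcases TB with _ | ⟨t, TB⟩
    · simp
    · simp only [reduceCtorEq, and_false, iff_false]
      intro h
      rw [List.getLast?_append_cons, List.getLast?_cons_cons] at h
      obtain ⟨y, hy, rfl⟩ := Option.map_eq_some_iff.1 h
      exact hB y (hsubB (List.mem_append_left FB (List.mem_of_getLast? hy))) rfl
  · -- the last `0` surviving in `A` cancels `q`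
    rw [List.concat_eq_append, List.foldr_append, List.foldr_cons, List.foldr_nil,
      reduceStep_cons_of_snd_false (hFA f (by simp)) rfl]
    simp only [List.append_eq_nil_iff, reduceCtorEq, and_false, false_and, iff_false]
    intro h
    obtain ⟨y, hy, rfl⟩ := Option.map_eq_some_iff.1 h
    rcases List.mem_append.1 (List.mem_of_getLast? hy) with hyA | hy
    · exact hA y (hsubA (List.mem_append_left _ hyA)) rfl
    · rcases List.mem_append.1 (foldr_reduceStep_sublist.subset (List.mem_filter.1 hy).1)
        with hyA | hyB
      · exact hA y (hsubA (List.mem_append_right TA (by simp [hyA]))) rfl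
      · exact hB y (hsubB (List.mem_append_left FB hyB)) rfl

end Signature

section Corners

variable {n k : ℕ}

theorem colour_emod_two (hn : 0 < n) (a : ℕ) (z : ℤ) :
    (colour n a z : ℤ) % 2 = ((a : ℤ) + z) % 2 := by
  have h0 : 0 ≤ ((a : ℤ) + z) % (2 * n) := Int.emod_nonneg _ (by omega)
  have h1 : ((a : ℤ) + z) % (2 * n) < 2 * n := Int.emod_lt_of_pos _ (by omega)
  have h2 : ((a : ℤ) + z) % (2 * n) % 2 = ((a : ℤ) + z) % 2 :=
    Int.emod_emod_of_dvd _ ⟨n, by ring⟩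
  have hr : ((((a : ℤ) + z) % (2 * n)).toNat : ℤ) = ((a : ℤ) + z) % (2 * n) :=
    Int.toNat_of_nonneg h0
  simp only [colour]
  split <;> omega

theorem colour_congr {a a' : ℕ} {z z' : ℤ} (h : (a : ℤ) + z = a' + z') :
    colour n a z = colour n a' z' := by
  simp only [colour, h]

theorem one_lt_abs_sub_of_colour_eq (hn : 0 < n) {a a' : ℕ} {z z' : ℤ}
    (h : colour n a z = colour n a' z') (hne : (a : ℤ) + z ≠ a' + z') :
    1 < |(a : ℤ) + z - (a' + z')| := by
  have h1 := colour_emod_two hn a z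
  have h2 := colour_emod_two hn a' z'
  rw [h] at h1
  rw [lt_abs]
  omega

theorem concaveAt_iff (Y : YD n k) (a : ℕ) (z : ℤ) :
    ConcaveAt Y a z ↔ z = Y.y a ∧ (a = 0 ∨ Y.y (a - 1) < Y.y a) := by
  constructor
  · rintro (⟨rfl, hz⟩ | ⟨m, rfl, hlt, hz⟩)
    · exact ⟨hz, Or.inl rfl⟩
    · exact ⟨hz, Or.inr (by simpa using hlt)⟩
  · rintro ⟨rfl, rfl | hlt⟩
    · exact Or.inl ⟨rfl, rfl⟩
    · cases a with
      | zero => simp at hlt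
      | succ m => exact Or.inr ⟨m, rfl, by simpa using hlt, rfl⟩

theorem convexAt_iff (Y : YD n k) (a : ℕ) (z : ℤ) :
    ConvexAt Y a z ↔ 1 ≤ a ∧ z = Y.y (a - 1) ∧ Y.y (a - 1) < Y.y a := by
  constructor
  · rintro ⟨m, rfl, hlt, hz⟩
    exact ⟨by omega, by simpa using hz, by simpa using hlt⟩
  · rintro ⟨ha, hz, hlt⟩
    cases a with
    | zero => omega
    | succ m => exact ⟨m, rfl, by simpa using hlt, by simpa using hz⟩

theorem not_convexAt_self (Y : YD n k) (l : ℕ) : ¬ConvexAt Y l (Y.y l) := by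
  rw [convexAt_iff]
  omega

theorem concaveAt_of_update_add_one {Y Y' : YD n k} {m : ℕ}
    (hY : Y.y = Function.update Y'.y m (Y'.y m + 1)) : ConcaveAt Y m (Y.y m) := by
  rw [concaveAt_iff]
  refine ⟨rfl, (Nat.eq_zero_or_pos m).imp_right fun hm => ?_⟩
  have := Y'.mono (Nat.sub_le m 1)
  rw [hY, Function.update_self, Function.update_of_ne (by omega)]
  omega

variable {Y Y' : YD n k} {l : ℕ}

theorem convexAt_of_update (hY' : Y'.y = Function.update Y.y l (Y.y l - 1)) :
    ConvexAt Y' (l + 1) (Y.y l - 1) := by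
  have : Y.y l ≤ Y.y (l + 1) := Y.mono (Nat.le_succ l)
  rw [convexAt_iff, Nat.add_sub_cancel, hY', Function.update_self,
    Function.update_of_ne (by omega)]
  omega

theorem concaveAt_iff_of_update (hY' : Y'.y = Function.update Y.y l (Y.y l - 1)) {a : ℕ} {z : ℤ}
    (hd : 1 < |(a : ℤ) + z - (l + Y.y l)|) : ConcaveAt Y' a z ↔ ConcaveAt Y a z := by
  rw [lt_abs] at hd
  simp only [concaveAt_iff, hY', Function.update_apply]
  split_ifs <;> subst_vars <;> omega

theorem convexAt_iff_of_update (hY' : Y'.y = Function.update Y.y l (Y.y l - 1)) {a : ℕ} {z : ℤ}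
    (hd : 1 < |(a : ℤ) + z - (l + Y.y l)|) : ConvexAt Y' a z ↔ ConvexAt Y a z := by
  rw [lt_abs] at hd
  simp only [convexAt_iff, hY', Function.update_apply]
  split_ifs <;> subst_vars <;> omega

end Corners

section Enumerates

def diag (p : ℕ × ℤ) : ℤ := p.1 + p.2

theorem diag_add_one_sub_one (l : ℕ) (z : ℤ) : diag (l + 1, z - 1) = diag (l, z) := by
  simp only [diag]
  push_cast
  ring

theorem eq_of_diag_eq {L : List (ℕ × ℤ)} (h : L.Pairwise fun p q => diag q < diag p)
    {p q : ℕ × ℤ} (hp : p ∈ L) (hq : q ∈ L) (hd : diag p = diag q) : p = q :=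
  List.inj_on_of_nodup_map (List.pairwise_map (R := (· > ·)).2 h).nodup hp hq hd

variable {n k i : ℕ} {Y Y' : YD n k} {L L' : List (ℕ × ℤ)}

theorem Enumerates.pairwise (h : Enumerates Y i L) : L.Pairwise fun p q => diag q < diag p :=
  List.isChain_iff_pairwise.1 h.2

theorem Enumerates.diag_lt_of_append_cons {s₁ s₂ : List (ℕ × ℤ)} {p : ℕ × ℤ}
    (h : Enumerates Y i (s₁ ++ p :: s₂)) :
    (∀ x ∈ s₁, diag p < diag x) ∧ ∀ x ∈ s₂, diag x < diag p := by
  have hP := h.pairwise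
  rw [List.pairwise_append, List.pairwise_cons] at hP
  exact ⟨fun x hx => hP.2.2 x hx p List.mem_cons_self, hP.2.1.1⟩

theorem Enumerates.eq_of_update (hn : 0 < n) {l : ℕ}
    (hY' : Y'.y = Function.update Y.y l (Y.y l - 1)) (hcol : colour n l (Y.y l) = i)
    {s₁ s₂ : List (ℕ × ℤ)} (hL : Enumerates Y i (s₁ ++ (l, Y.y l) :: s₂))
    (hL' : Enumerates Y' i L') : L' = s₁ ++ (l + 1, Y.y l - 1) :: s₂ := by
  have hdq := diag_add_one_sub_one l (Y.y l)
  have hqL' : (l + 1, Y.y l - 1) ∈ L' :=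
    (hL'.1 _).2 ⟨Or.inr (convexAt_of_update hY'), (colour_congr hdq).trans hcol⟩
  have hpair : (s₁ ++ (l + 1, Y.y l - 1) :: s₂).Pairwise fun p q => diag q < diag p := by
    rw [← List.pairwise_map (R := (· > ·))]
    simpa [hdq] using (List.pairwise_map (R := (· > ·)) (f := diag)).2 hL.pairwise
  have : Std.Irrefl fun p q : ℕ × ℤ => diag q < diag p := ⟨fun _ => lt_irrefl _⟩
  have : Std.Antisymm fun p q : ℕ × ℤ => diag q < diag p := ⟨fun _ _ h h' => (h.asymm h').elim⟩
  refine hL'.pairwise.eq_of_mem_iff hpair fun x => ?_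
  by_cases hx : diag x = diag (l, Y.y l)
  · have hxq : diag x = diag (l + 1, Y.y l - 1) := hx.trans hdq.symm
    constructor <;> intro hxL
    · rw [eq_of_diag_eq hL'.pairwise hxL hqL' hxq]
      simp
    · rw [eq_of_diag_eq hpair hxL (by simp) hxq]
      exact hqL'
  · have hxp : x ≠ (l, Y.y l) := fun h => hx (congrArg diag h)
    have hxq : x ≠ (l + 1, Y.y l - 1) := fun h => hx (by rw [h, hdq])
    rw [hL'.1 x, show x ∈ s₁ ++ (l + 1, Y.y l - 1) :: s₂ ↔ x ∈ s₁ ++ (l, Y.y l) :: s₂ by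
      simp [hxp, hxq], hL.1 x]
    refine and_congr_left fun hcx => ?_
    have hd := one_lt_abs_sub_of_colour_eq hn (hcx.trans hcol.symm) hx
    exact or_congr (concaveAt_iff_of_update hY' hd) (convexAt_iff_of_update hY' hd)

theorem sigL_update (hn : 0 < n) {l : ℕ} (hY' : Y'.y = Function.update Y.y l (Y.y l - 1))
    (hcol : colour n l (Y.y l) = i) {s₁ s₂ : List (ℕ × ℤ)}
    (hL : Enumerates Y i (s₁ ++ (l, Y.y l) :: s₂)) :
    sigL Y' (s₁ ++ (l + 1, Y.y l - 1) :: s₂) =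
      sigL Y s₁ ++ ((l + 1, Y.y l - 1), true) :: sigL Y s₂ := by
  obtain ⟨hs₁, hs₂⟩ := hL.diag_lt_of_append_cons
  have hsig : ∀ s ⊆ s₁ ++ (l, Y.y l) :: s₂, (∀ x ∈ s, diag x ≠ diag (l, Y.y l)) →
      sigL Y' s = sigL Y s := fun s hsub hne => List.map_congr_left fun x hx => by
    have hd := one_lt_abs_sub_of_colour_eq hn (((hL.1 x).1 (hsub hx)).2.trans hcol.symm) (hne x hx)
    rw [convexAt_iff_of_update hY' hd]
  rw [sigL, List.map_append, List.map_cons, ← sigL, ← sigL,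
    hsig s₁ (by simp) fun x hx => (hs₁ x hx).ne', hsig s₂ (by simp) fun x hx => (hs₂ x hx).ne,
    if_pos (convexAt_of_update hY')]

end Enumerates

section Crystal

variable {n k i : ℕ} {Y Y' : YD n k} {L L' : List (ℕ × ℤ)} {p : ℕ × ℤ}

theorem concaveAt_of_ftildeSite_eq_some (hL : Enumerates Y i L) (h : ftildeSite Y i L = some p) :
    ConcaveAt Y p.1 p.2 ∧ colour n p.1 p.2 = i := by
  obtain ⟨x, hx, rfl⟩ := Option.map_eq_some_iff.1 h
  obtain ⟨a, ha, rfl⟩ := List.mem_map.1 (reduceSig_sublist.subset (List.mem_of_find?_eq_some hx))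
  have hb := List.find?_some hx
  obtain ⟨hcorner, hcol⟩ := (hL.1 a).1 ha
  exact ⟨hcorner.resolve_right fun hc => by simp [hc] at hb, hcol⟩

theorem convexAt_of_etildeSite_eq_some (hL : Enumerates Y i L) (h : etildeSite Y i L = some p) :
    ConvexAt Y p.1 p.2 ∧ colour n p.1 p.2 = i := by
  obtain ⟨x, hx, rfl⟩ := Option.map_eq_some_iff.1 h
  obtain ⟨hxR, hb⟩ := List.mem_filter.1 (List.mem_of_getLast? hx)
  obtain ⟨a, ha, rfl⟩ := List.mem_map.1 (reduceSig_sublist.subset hxR)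
  exact ⟨by_contra fun hc => by simp [hc] at hb, ((hL.1 a).1 ha).2⟩

theorem ftildeSite_eq_some_iff_etildeSite_eq_some (hn : 0 < n) {l : ℕ}
    (hY' : Y'.y = Function.update Y.y l (Y.y l - 1)) (hp : ConcaveAt Y l (Y.y l))
    (hcol : colour n l (Y.y l) = i) (hL : Enumerates Y i L) (hL' : Enumerates Y' i L') :
    ftildeSite Y i L = some (l, Y.y l) ↔ etildeSite Y' i L' = some (l + 1, Y.y l - 1) := by
  obtain ⟨s₁, s₂, rfl⟩ := List.append_of_mem ((hL.1 (l, Y.y l)).2 ⟨Or.inl hp, hcol⟩)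
  obtain rfl := hL.eq_of_update hn hY' hcol hL'
  have hdq := diag_add_one_sub_one l (Y.y l)
  obtain ⟨hs₁, hs₂⟩ := hL.diag_lt_of_append_cons
  have hfresh : ∀ r, diag r = diag (l, Y.y l) →
      (∀ y ∈ sigL Y s₁, y.1 ≠ r) ∧ ∀ y ∈ sigL Y s₂, y.1 ≠ r := by
    refine fun r hr => ⟨fun y hy h => ?_, fun y hy h => ?_⟩ <;>
      obtain ⟨a, ha, rfl⟩ := List.mem_map.1 hy <;> subst h
    · exact (hs₁ a ha).ne' hr
    · exact (hs₂ a ha).ne hr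
  have hsigL : sigL Y (s₁ ++ (l, Y.y l) :: s₂) = sigL Y s₁ ++ ((l, Y.y l), false) :: sigL Y s₂ := by
    simp [sigL, not_convexAt_self]
  rw [ftildeSite, etildeSite, hsigL, sigL_update hn hY' hcol hL,
    find?_reduceSig_append_false_eq_some_iff (hfresh _ rfl).1 (hfresh _ rfl).2,
    getLast?_filter_reduceSig_append_true_eq_some_iff (hfresh _ hdq).1 (hfresh _ hdq).2]

end Crystal

theorem ftilde_etilde_inverse_general (n : ℕ) (hn : 2 ≤ n) (k : ℕ) (i : ℕ)
    (Y Y' : YD n k) (L L' : List (ℕ × ℤ))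
    (hL : Enumerates Y i L) (hL' : Enumerates Y' i L') :
    (∃ p : ℕ × ℤ, ftildeSite Y i L = some p ∧
        Y'.y = Function.update Y.y p.1 (Y.y p.1 - 1))
      ↔ (∃ p : ℕ × ℤ, etildeSite Y' i L' = some p ∧
        Y.y = Function.update Y'.y (p.1 - 1) (Y'.y (p.1 - 1) + 1)) := by
  constructor
  · rintro ⟨⟨l, z⟩, hf, hY'⟩
    obtain ⟨hp, hcol⟩ := concaveAt_of_ftildeSite_eq_some hL hf
    obtain rfl : z = Y.y l := ((concaveAt_iff Y l z).1 hp).1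
    refine ⟨_, (ftildeSite_eq_some_iff_etildeSite_eq_some (by omega) hY' hp hcol hL hL').1 hf, ?_⟩
    simp [hY']
  · rintro ⟨q, he, hY⟩
    obtain ⟨⟨m, hm, -, hz⟩, hcol⟩ := convexAt_of_etildeSite_eq_some hL' he
    rw [hm, Nat.add_sub_cancel] at hY
    have hYm : Y.y m = Y'.y m + 1 := by simp [hY]
    have hY' : Y'.y = Function.update Y.y m (Y.y m - 1) := by simp [hY]
    have hcol' : colour n m (Y.y m) = i :=
      (colour_congr (by push_cast; omega)).trans (hm ▸ hz ▸ hcol)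
    refine ⟨(m, Y.y m), (ftildeSite_eq_some_iff_etildeSite_eq_some (by omega) hY'
      (concaveAt_of_update_add_one hY) hcol' hL hL').2 ?_, hY'⟩
    rwa [hYm, add_sub_cancel_right, ← hz, ← hm]

/-- For every `k ∈ I`, every `i ∈ I` and all Young diagrams `Y, Y'` of charge
`k`: `f̃_i Y = Y'` if and only if `ẽ_i Y' = Y`.  Here `f̃_i Y = Y'` means that `f̃_i` adds a
box to `Y` at the site `p` selected by the signature rule and `Y'` is the result, and
`ẽ_i Y' = Y` means that `ẽ_i` removes the convex corner of `Y'` at the site `p` selected by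
the signature rule and `Y` is the result. -/
theorem ftilde_etilde_inverse (n : ℕ) (hn : 2 ≤ n) (k : ℕ) (hk : k ≤ n) (i : ℕ) (hi : i ≤ n)
    (Y Y' : YD n k) (L L' : List (ℕ × ℤ))
    (hL : Enumerates Y i L) (hL' : Enumerates Y' i L') :
    (∃ p : ℕ × ℤ, ftildeSite Y i L = some p ∧
        Y'.y = Function.update Y.y p.1 (Y.y p.1 - 1))
      ↔ (∃ p : ℕ × ℤ, etildeSite Y' i L' = some p ∧
        Y.y = Function.update Y'.y (p.1 - 1) (Y'.y (p.1 - 1) + 1)) :=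
  ftilde_etilde_inverse_general n hn k i Y Y' L L' hL hL'

end
end
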